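/- arXiv:2006.12592 — 2 statements merged into one kernel-verified Lean document; each statement's English description precedes it below -/
import Mathlib

section
/- Fix μ > 0, λ > 0, a finite index set E, positive weights ω_l for l ∈ E, vectors c_l ∈ ℝ^n with ‖c_l‖₂ = √2 for each l ∈ E, and a matrix X ∈ ℝ^{p×n}. Define G : ℝ^{p×n} → ℝ^{p×n} by G(U) := U − X + λ Σ_{l∈E} ω_l P₂(U c_l / μ) (c_l)ᵀ, where P₂(v) := v if ‖v‖₂ ≤ 1 and P₂(v) := v/‖v‖₂ otherwise, and where P₂(U c_l / μ)(c_l)ᵀ denotes the p×n rank-one matrix formed as the outer product of the column vector P₂(U c_l/μ) ∈ ℝ^p and c_l ∈ ℝ^n. Then for all U, V ∈ ℝ^{p×n}, ‖G(U) − G(V)‖_F ≤ (1 + (2λ Σ_{l∈E} ω_l)/μ) ‖U − V‖_F, where ‖·‖_F is the Frobenius norm. -/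
/-- Euclidean norm of a vector in `ℝ^m`. -/
noncomputable def enorm2 {m : ℕ} (x : Fin m → ℝ) : ℝ := Real.sqrt (∑ i, x i ^ 2)

/-- Frobenius norm of a `p × n` real matrix. -/
noncomputable def frob {p n : ℕ} (U : Fin p → Fin n → ℝ) : ℝ :=
  Real.sqrt (∑ i, ∑ j, U i j ^ 2)

/-- Matrix-vector product. -/
noncomputable def mulVecF {p n : ℕ} (U : Fin p → Fin n → ℝ) (c : Fin n → ℝ) : Fin p → ℝ :=
  fun i => ∑ j, U i j * c j

/-- Projection onto the closed Euclidean unit ball. -/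
noncomputable def proj2 {m : ℕ} (v : Fin m → ℝ) : Fin m → ℝ :=
  if enorm2 v ≤ 1 then v else fun i => v i / enorm2 v

/-! The map `P₂` is the radial retraction onto the closed unit ball, i.e. the metric projection
onto a closed convex set; its variational inequality `⟪x - P x, y - P x⟫ ≤ 0` makes it
nonexpansive. Since `‖U c‖₂ ≤ ‖U‖_F ‖c‖₂` and `‖v cᵀ‖_F ≤ ‖v‖₂ ‖c‖₂`, each summand
`U ↦ P₂(U c_l / μ) c_lᵀ` is `‖c_l‖₂² / μ = 2 / μ`-Lipschitz, and the triangle inequality for the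
Frobenius norm adds up the constants. -/

open Finset Matrix WithLp RealInnerProductSpace

attribute [local instance] Matrix.frobeniusNormedAddCommGroup Matrix.frobeniusNormedSpace

section Nonexpansive

variable {F : Type*} [NormedAddCommGroup F] [InnerProductSpace ℝ F]

theorem norm_sub_le_of_forall_inner_sub_nonpos {K : Set F} {P : F → F} (hPK : ∀ x, P x ∈ K)
    (hP : ∀ x, ∀ y ∈ K, ⟪x - P x, y - P x⟫ ≤ 0) (a b : F) : ‖P a - P b‖ ≤ ‖a - b‖ := by
  have hsq : ‖P a - P b‖ ^ 2 ≤ ⟪a - b, P a - P b⟫ := by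
    have ha := hP a (P b) (hPK b)
    have hb := hP b (P a) (hPK a)
    rw [← real_inner_self_eq_norm_sq]
    simp only [inner_sub_left, inner_sub_right, real_inner_comm] at ha hb ⊢
    linarith
  have hcs := real_inner_le_norm (a - b) (P a - P b)
  nlinarith [norm_nonneg (P a - P b), norm_nonneg (a - b)]

noncomputable def ballRetraction (x : F) : F := (max 1 ‖x‖)⁻¹ • x

theorem norm_ballRetraction_le_one (x : F) : ‖ballRetraction x‖ ≤ 1 := by
  have h1 : 0 < max 1 ‖x‖ := lt_max_of_lt_left one_pos
  rw [ballRetraction, norm_smul, norm_inv, Real.norm_of_nonneg h1.le, inv_mul_le_one₀ h1]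
  exact le_max_right _ _

theorem inner_sub_ballRetraction_nonpos (x : F) {y : F} (hy : ‖y‖ ≤ 1) :
    ⟪x - ballRetraction x, y - ballRetraction x⟫ ≤ 0 := by
  rcases le_or_gt ‖x‖ 1 with hx | hx
  · simp [ballRetraction, max_eq_left hx]
  have hx0 : 0 < ‖x‖ := one_pos.trans hx
  have hsub : x - ballRetraction x = (1 - ‖x‖⁻¹) • x := by
    rw [ballRetraction, max_eq_right hx.le, sub_smul, one_smul]
  have hxy : ⟪x, y⟫ ≤ ‖x‖ := (real_inner_le_norm x y).trans (mul_le_of_le_one_right hx0.le hy)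
  have hcoef : 0 ≤ 1 - ‖x‖⁻¹ := sub_nonneg.2 (inv_le_one_of_one_le₀ hx.le)
  rw [hsub, ballRetraction, max_eq_right hx.le, real_inner_smul_left, inner_sub_right,
    real_inner_smul_right, real_inner_self_eq_norm_sq, inv_mul_eq_div, sq, mul_self_div_self]
  exact mul_nonpos_of_nonneg_of_nonpos hcoef (by linarith)

theorem norm_ballRetraction_sub_le (a b : F) :
    ‖ballRetraction a - ballRetraction b‖ ≤ ‖a - b‖ :=
  norm_sub_le_of_forall_inner_sub_nonpos (K := Metric.closedBall 0 1)
    (fun x => mem_closedBall_zero_iff.2 (norm_ballRetraction_le_one x))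
    (fun x _ hy => inner_sub_ballRetraction_nonpos x (mem_closedBall_zero_iff.1 hy)) a b

end Nonexpansive

section FrobeniusNorm

variable {𝕜 : Type*} [RCLike 𝕜] {m n : Type*} [Fintype m] [Fintype n]

theorem Matrix.norm_toLp_mulVec_le_frobenius (A : Matrix m n 𝕜) (v : n → 𝕜) :
    ‖toLp 2 (A *ᵥ v)‖ ≤ ‖A‖ * ‖toLp 2 v‖ := by
  simpa only [← replicateCol_mulVec, frobenius_norm_replicateCol] using
    frobenius_norm_mul A (replicateCol Unit v)

theorem Matrix.frobenius_norm_vecMulVec_le (v : m → 𝕜) (w : n → 𝕜) :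
    ‖vecMulVec v w‖ ≤ ‖toLp 2 v‖ * ‖toLp 2 w‖ := by
  simpa only [← vecMulVec_eq Unit, frobenius_norm_replicateCol, frobenius_norm_replicateRow] using
    frobenius_norm_mul (replicateCol Unit v) (replicateRow Unit w)

end FrobeniusNorm

theorem enorm2_eq_norm_toLp {m : ℕ} (x : Fin m → ℝ) : enorm2 x = ‖toLp 2 x‖ := by
  simp [enorm2, EuclideanSpace.norm_eq]

theorem frob_eq_norm_of {p n : ℕ} (A : Fin p → Fin n → ℝ) : frob A = ‖of A‖ := by
  simp [frob, frobenius_norm_def, Real.sqrt_eq_rpow]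

theorem toLp_proj2 {m : ℕ} (v : Fin m → ℝ) : toLp 2 (proj2 v) = ballRetraction (toLp 2 v) := by
  rw [proj2, ballRetraction, ← enorm2_eq_norm_toLp]
  split_ifs with h
  · simp [max_eq_left h]
  · ext i
    simp [max_eq_right (le_of_not_ge h), div_eq_inv_mul]

theorem norm_toLp_proj2_sub_le {m : ℕ} (a b : Fin m → ℝ) :
    ‖toLp 2 (proj2 a - proj2 b)‖ ≤ ‖toLp 2 (a - b)‖ := by
  simpa only [toLp_sub, toLp_proj2] using norm_ballRetraction_sub_le (toLp 2 a) (toLp 2 b)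

theorem norm_vecMulVec_proj2_sub_le {p n : ℕ} {μ : ℝ} (hμ : 0 < μ) (U V : Fin p → Fin n → ℝ)
    (c : Fin n → ℝ) :
    ‖vecMulVec (proj2 (μ⁻¹ • mulVecF U c) - proj2 (μ⁻¹ • mulVecF V c)) c‖
      ≤ enorm2 c ^ 2 / μ * frob (U - V) := by
  have hdiff : μ⁻¹ • mulVecF U c - μ⁻¹ • mulVecF V c = μ⁻¹ • (of (U - V) *ᵥ c) := by
    change μ⁻¹ • (of U *ᵥ c) - μ⁻¹ • (of V *ᵥ c) = _
    rw [← smul_sub, ← sub_mulVec, of_sub_of]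
  have hproj : ‖toLp 2 (proj2 (μ⁻¹ • mulVecF U c) - proj2 (μ⁻¹ • mulVecF V c))‖
      ≤ μ⁻¹ * (frob (U - V) * enorm2 c) := by
    refine (norm_toLp_proj2_sub_le _ _).trans ?_
    rw [hdiff, toLp_smul, norm_smul, Real.norm_of_nonneg (inv_nonneg.2 hμ.le), frob_eq_norm_of,
      enorm2_eq_norm_toLp]
    exact mul_le_mul_of_nonneg_left (norm_toLp_mulVec_le_frobenius _ _) (inv_nonneg.2 hμ.le)
  calc _ ≤ _ := frobenius_norm_vecMulVec_le _ _
    _ ≤ μ⁻¹ * (frob (U - V) * enorm2 c) * enorm2 c := by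
        rw [← enorm2_eq_norm_toLp c]
        exact mul_le_mul_of_nonneg_right hproj (Real.sqrt_nonneg _)
    _ = enorm2 c ^ 2 / μ * frob (U - V) := by ring

/-- The gradient map `G(U) = U - X + λ Σ_l ω_l P₂(U c_l/μ) c_lᵀ` is Lipschitz with constant
`1 + 2λ(Σ_l ω_l)/μ` in the Frobenius norm. -/
theorem stmt6 {p n : ℕ} {ι : Type*} (E : Finset ι) (μ lam : ℝ) (hμ : 0 < μ) (hlam : 0 < lam)
    (ω : ι → ℝ) (hω : ∀ l ∈ E, 0 < ω l) (c : ι → Fin n → ℝ)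
    (hc : ∀ l ∈ E, enorm2 (c l) = Real.sqrt 2) (X : Fin p → Fin n → ℝ) :
    ∀ U V : Fin p → Fin n → ℝ,
      frob ((fun i j => U i j - X i j
              + lam * ∑ l ∈ E, ω l * (proj2 (μ⁻¹ • mulVecF U (c l)) i * c l j))
            - fun i j => V i j - X i j
              + lam * ∑ l ∈ E, ω l * (proj2 (μ⁻¹ • mulVecF V (c l)) i * c l j))
        ≤ (1 + 2 * lam * (∑ l ∈ E, ω l) / μ) * frob (U - V) := by
  intro U V
  set D : ι → Matrix (Fin p) (Fin n) ℝ := fun l =>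
    vecMulVec (proj2 (μ⁻¹ • mulVecF U (c l)) - proj2 (μ⁻¹ • mulVecF V (c l))) (c l)
  have hD : ∀ l ∈ E, ‖(lam * ω l) • D l‖ ≤ 2 * lam * ω l / μ * frob (U - V) := fun l hl => by
    have hpos : 0 ≤ lam * ω l := (mul_pos hlam (hω l hl)).le
    have h := norm_vecMulVec_proj2_sub_le hμ U V (c l)
    rw [hc l hl, Real.sq_sqrt zero_le_two] at h
    calc _ = lam * ω l * ‖D l‖ := by rw [norm_smul, Real.norm_of_nonneg hpos]
      _ ≤ lam * ω l * (2 / μ * frob (U - V)) := mul_le_mul_of_nonneg_left h hpos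
      _ = _ := by ring
  rw [frob_eq_norm_of]
  calc _ = ‖of (U - V) + ∑ l ∈ E, (lam * ω l) • D l‖ := by
        congr 1
        ext i j
        simp only [D, Matrix.add_apply, of_apply, Matrix.sum_apply, Matrix.smul_apply,
          vecMulVec_apply, Pi.sub_apply, smul_eq_mul]
        rw [mul_sum, mul_sum, add_sub_add_comm, sub_sub_sub_cancel_right, ← sum_sub_distrib]
        exact congrArg _ (sum_congr rfl fun l _ => by ring)
    _ ≤ ‖of (U - V)‖ + ∑ l ∈ E, ‖(lam * ω l) • D l‖ :=
        (norm_add_le _ _).trans (add_le_add le_rfl (norm_sum_le _ _))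
    _ ≤ frob (U - V) + ∑ l ∈ E, 2 * lam * ω l / μ * frob (U - V) := by
        rw [← frob_eq_norm_of]
        exact add_le_add le_rfl (sum_le_sum hD)
    _ = _ := by rw [← sum_mul, ← sum_div, ← mul_sum]; ring
end

section
/- Fix λ > 0, γ ≥ 0, ε > 0, data points x₁,…,x_n ∈ ℝ^p, a finite index set E with positive weights ω_l and vectors c_l ∈ ℝ^n for l ∈ E, and positive constants ν₁,…,ν_p. Let W := Σ_{l∈E} ω_l, set μ := ε/(2λW) and L := 1 + 2λW/μ = 1 + 4λ²W²/ε. Define f(U) := (1/2) Σ_{i=1}^n ‖x_i − u_i‖₂² + λ Σ_{l∈E} ω_l ‖U c_l‖₂ + γ Σ_{k=1}^p ν_k ‖a_k‖₂ and f̃_μ(U) := (1/2) Σ_{i=1}^n ‖x_i − u_i‖₂² + λ Σ_{l∈E} ω_l g_μ(U c_l) + γ Σ_{k=1}^p ν_k ‖a_k‖₂, where g_μ(z) := sup{⟨α,z⟩ − (μ/2)‖α‖₂² : ‖α‖₂ ≤ 1}. Let U* be a global minimizer of f, let U⁰ ∈ ℝ^{p×n}, let t ≥ 1, and suppose U^t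 ∈ ℝ^{p×n} satisfies f̃_μ(U^t) − inf_{U} f̃_μ(U) ≤ 2L‖U* − U⁰‖_F²/t². Then f(U^t) − f(U*) ≤ ε/2 + (2‖U* − U⁰‖_F²/t²)(1 + 4λ²W²/ε). -/
/-- Euclidean norm of a vector in `ℝ^m`. -/
noncomputable def enormE {m : ℕ} (x : Fin m → ℝ) : ℝ := Real.sqrt (∑ i, x i ^ 2)

/-- The smoothed norm `g_μ(z) = sup { ⟨α, z⟩ - (μ/2)‖α‖₂² : ‖α‖₂ ≤ 1 }`. -/
noncomputable def gsm {m : ℕ} (μ : ℝ) (z : Fin m → ℝ) : ℝ :=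
  sSup ((fun α : Fin m → ℝ => (∑ i, α i * z i) - μ / 2 * enormE α ^ 2) ''
    {α : Fin m → ℝ | enormE α ≤ 1})

/-- The sparse convex clustering objective `f`. -/
noncomputable def objf {p n : ℕ} {ι : Type*} (lam γ : ℝ) (x : Fin n → Fin p → ℝ)
    (E : Finset ι) (ω : ι → ℝ) (c : ι → Fin n → ℝ) (ν : Fin p → ℝ)
    (U : Fin p → Fin n → ℝ) : ℝ :=
  (1 / 2) * ∑ i, enormE (fun k => x i k - U k i) ^ 2
    + lam * ∑ l ∈ E, ω l * enormE (mulVecF U (c l))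
    + γ * ∑ k, ν k * enormE (U k)

/-- The smoothed sparse convex clustering objective `f̃_μ`. -/
noncomputable def objft {p n : ℕ} {ι : Type*} (lam γ μ : ℝ) (x : Fin n → Fin p → ℝ)
    (E : Finset ι) (ω : ι → ℝ) (c : ι → Fin n → ℝ) (ν : Fin p → ℝ)
    (U : Fin p → Fin n → ℝ) : ℝ :=
  (1 / 2) * ∑ i, enormE (fun k => x i k - U k i) ^ 2
    + lam * ∑ l ∈ E, ω l * gsm μ (mulVecF U (c l))
    + γ * ∑ k, ν k * enormE (U k)

/-!
Since `g_μ(z) ≤ ‖z‖₂ ≤ g_μ(z) + μ/2`, the smoothed objective is sandwiched: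
`f - λμW/2 ≤ f̃_μ ≤ f`. Hence `f(Uᵗ) ≤ f̃_μ(Uᵗ) + λμW/2 ≤ inf f̃_μ + 2L‖U* - U⁰‖²/t² + ε/4`
and `inf f̃_μ ≤ f̃_μ(U*) ≤ f(U*)`.
-/

section SmoothedNorm

variable {m : ℕ}

lemma enormE_nonneg (z : Fin m → ℝ) : 0 ≤ enormE z := Real.sqrt_nonneg _

lemma sum_mul_self_eq_enormE_sq (z : Fin m → ℝ) : ∑ i, z i * z i = enormE z ^ 2 := by
  rw [enormE, Real.sq_sqrt (by positivity)]
  simp only [sq]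

lemma enormE_smul (a : ℝ) (z : Fin m → ℝ) : enormE (a • z) = |a| * enormE z := by
  simp only [enormE, Pi.smul_apply, smul_eq_mul, mul_pow, ← Finset.mul_sum]
  rw [Real.sqrt_mul (sq_nonneg a), Real.sqrt_sq_eq_abs]

lemma sum_mul_le_enormE_mul_enormE (α z : Fin m → ℝ) :
    ∑ i, α i * z i ≤ enormE α * enormE z := by
  simpa [enormE] using Real.sum_mul_le_sqrt_mul_sqrt Finset.univ α z

lemma sum_mul_sub_le_enormE {μ : ℝ} (hμ : 0 ≤ μ) {α : Fin m → ℝ} (hα : enormE α ≤ 1)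
    (z : Fin m → ℝ) : ∑ i, α i * z i - μ / 2 * enormE α ^ 2 ≤ enormE z := by
  have := sum_mul_le_enormE_mul_enormE α z
  nlinarith [enormE_nonneg z, sq_nonneg (enormE α)]

lemma gsm_le_enormE {μ : ℝ} (hμ : 0 ≤ μ) (z : Fin m → ℝ) : gsm μ z ≤ enormE z :=
  csSup_le ⟨_, 0, by simp [enormE], rfl⟩ fun _ ⟨_, hα, h⟩ => h ▸ sum_mul_sub_le_enormE hμ hα z

/-- Witnessed by `α = z / ‖z‖₂`, or by `α = 0` when `z = 0`. -/
lemma enormE_le_gsm_add {μ : ℝ} (hμ : 0 ≤ μ) (z : Fin m → ℝ) :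
    enormE z ≤ gsm μ z + μ / 2 := by
  have hbdd : BddAbove ((fun α : Fin m → ℝ => ∑ i, α i * z i - μ / 2 * enormE α ^ 2) ''
      {α | enormE α ≤ 1}) :=
    ⟨enormE z, fun _ ⟨_, hα, h⟩ => h ▸ sum_mul_sub_le_enormE hμ hα z⟩
  rcases (enormE_nonneg z).eq_or_lt with hz | hz
  · have hzero : enormE (0 : Fin m → ℝ) = 0 := by simp [enormE]
    have := le_csSup hbdd ⟨0, hzero.trans_le zero_le_one, rfl⟩
    simp only [Pi.zero_apply, zero_mul, Finset.sum_const_zero, hzero] at this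
    rw [← hz]
    unfold gsm
    linarith
  · have hunit : enormE ((enormE z)⁻¹ • z) = 1 := by
      rw [enormE_smul, abs_inv, abs_of_pos hz, inv_mul_cancel₀ hz.ne']
    have hvalue : ∑ i, ((enormE z)⁻¹ • z) i * z i = enormE z := by
      simp only [Pi.smul_apply, smul_eq_mul, mul_assoc, ← Finset.mul_sum,
        sum_mul_self_eq_enormE_sq]
      field_simp
    have := le_csSup hbdd ⟨(enormE z)⁻¹ • z, hunit.le, rfl⟩
    simp only [hvalue, hunit] at this
    unfold gsm
    linarith

end SmoothedNorm

section SmoothedObjective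

variable {p n : ℕ} {ι : Type*} {lam γ μ : ℝ} {x : Fin n → Fin p → ℝ} {E : Finset ι}
  {ω : ι → ℝ} {c : ι → Fin n → ℝ} {ν : Fin p → ℝ}

lemma objft_le_objf (hlam : 0 ≤ lam) (hω : ∀ l ∈ E, 0 ≤ ω l) (hμ : 0 ≤ μ)
    (U : Fin p → Fin n → ℝ) : objft lam γ μ x E ω c ν U ≤ objf lam γ x E ω c ν U := by
  have : ∑ l ∈ E, ω l * gsm μ (mulVecF U (c l)) ≤ ∑ l ∈ E, ω l * enormE (mulVecF U (c l)) :=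
    Finset.sum_le_sum fun l hl => mul_le_mul_of_nonneg_left (gsm_le_enormE hμ _) (hω l hl)
  unfold objf objft
  gcongr

lemma objf_le_objft_add (hlam : 0 ≤ lam) (hω : ∀ l ∈ E, 0 ≤ ω l) (hμ : 0 ≤ μ)
    (U : Fin p → Fin n → ℝ) :
    objf lam γ x E ω c ν U ≤ objft lam γ μ x E ω c ν U + lam * (μ / 2) * ∑ l ∈ E, ω l := by
  have : ∑ l ∈ E, ω l * enormE (mulVecF U (c l))
      ≤ ∑ l ∈ E, ω l * gsm μ (mulVecF U (c l)) + (μ / 2) * ∑ l ∈ E, ω l := by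
    rw [Finset.mul_sum, ← Finset.sum_add_distrib]
    refine Finset.sum_le_sum fun l hl => ?_
    nlinarith [mul_le_mul_of_nonneg_left (enormE_le_gsm_add hμ (mulVecF U (c l))) (hω l hl)]
  unfold objf objft
  nlinarith [mul_le_mul_of_nonneg_left this hlam]

end SmoothedObjective

theorem stmt8_general {p n : ℕ} {ι : Type*} (E : Finset ι) (lam γ ε : ℝ)
    (hlam : 0 < lam) (hε : 0 < ε)
    (x : Fin n → Fin p → ℝ) (ω : ι → ℝ) (hω : ∀ l ∈ E, 0 < ω l) (c : ι → Fin n → ℝ)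
    (ν : Fin p → ℝ)
    (W μ L : ℝ) (hW : W = ∑ l ∈ E, ω l) (hμ : μ = ε / (2 * lam * W))
    (hL : L = 1 + 4 * lam ^ 2 * W ^ 2 / ε)
    (Ustar U0 Ut : Fin p → Fin n → ℝ)
    (hUstar : ∀ V : Fin p → Fin n → ℝ, objf lam γ x E ω c ν Ustar ≤ objf lam γ x E ω c ν V)
    (t : ℝ)
    (hrate : objft lam γ μ x E ω c ν Ut - (⨅ V : Fin p → Fin n → ℝ, objft lam γ μ x E ω c ν V)
      ≤ 2 * L * frob (Ustar - U0) ^ 2 / t ^ 2) :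
    objf lam γ x E ω c ν Ut - objf lam γ x E ω c ν Ustar
      ≤ ε / 2 + (2 * frob (Ustar - U0) ^ 2 / t ^ 2) * (1 + 4 * lam ^ 2 * W ^ 2 / ε) := by
  have hω0 : ∀ l ∈ E, 0 ≤ ω l := fun l hl => (hω l hl).le
  have hW0 : 0 ≤ W := hW ▸ Finset.sum_nonneg hω0
  have hμ0 : 0 ≤ μ := hμ ▸ by positivity
  have hlower (V : Fin p → Fin n → ℝ) :
      objf lam γ x E ω c ν V - lam * (μ / 2) * W ≤ objft lam γ μ x E ω c ν V := by
    linarith [hW ▸ objf_le_objft_add (γ := γ) (x := x) (c := c) (ν := ν) hlam.le hω0 hμ0 V]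
  -- `f̃_μ` is bounded below by `f(U*) - λμW/2`, so the infimum is not the junk value `0`.
  have hinf : (⨅ V, objft lam γ μ x E ω c ν V) ≤ objf lam γ x E ω c ν Ustar :=
    (ciInf_le ⟨_, Set.forall_mem_range.2 fun V => (sub_le_sub_right (hUstar V) _).trans
      (hlower V)⟩ Ustar).trans (objft_le_objf hlam.le hω0 hμ0 Ustar)
  have hgap : lam * (μ / 2) * W ≤ ε / 2 := by
    -- for `W = 0` the division defining `μ` returns `0`
    rcases hW0.eq_or_lt with hW' | hW'
    · rw [← hW']; linarith
    · rw [hμ, show lam * (ε / (2 * lam * W) / 2) * W = ε / 4 by field_simp; ring]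
      linarith
  have hL_bound : 2 * L * frob (Ustar - U0) ^ 2 / t ^ 2
      = (2 * frob (Ustar - U0) ^ 2 / t ^ 2) * (1 + 4 * lam ^ 2 * W ^ 2 / ε) := by
    rw [hL]; ring
  linarith [hlower Ut]

/-- Convergence bound of the smoothing proximal gradient iterate. -/
theorem stmt8 {p n : ℕ} {ι : Type*} (E : Finset ι) (lam γ ε : ℝ)
    (hlam : 0 < lam) (hγ : 0 ≤ γ) (hε : 0 < ε)
    (x : Fin n → Fin p → ℝ) (ω : ι → ℝ) (hω : ∀ l ∈ E, 0 < ω l) (c : ι → Fin n → ℝ)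
    (ν : Fin p → ℝ) (hν : ∀ k, 0 < ν k)
    (W μ L : ℝ) (hW : W = ∑ l ∈ E, ω l) (hμ : μ = ε / (2 * lam * W))
    (hL : L = 1 + 4 * lam ^ 2 * W ^ 2 / ε)
    (Ustar U0 Ut : Fin p → Fin n → ℝ)
    (hUstar : ∀ V : Fin p → Fin n → ℝ, objf lam γ x E ω c ν Ustar ≤ objf lam γ x E ω c ν V)
    (t : ℝ) (ht : 1 ≤ t)
    (hrate : objft lam γ μ x E ω c ν Ut - (⨅ V : Fin p → Fin n → ℝ, objft lam γ μ x E ω c ν V)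
      ≤ 2 * L * frob (Ustar - U0) ^ 2 / t ^ 2) :
    objf lam γ x E ω c ν Ut - objf lam γ x E ω c ν Ustar
      ≤ ε / 2 + (2 * frob (Ustar - U0) ^ 2 / t ^ 2) * (1 + 4 * lam ^ 2 * W ^ 2 / ε) :=
  stmt8_general E lam γ ε hlam hε x ω hω c ν W μ L hW hμ hL Ustar U0 Ut hUstar t hrate
end
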